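/- arXiv:0709.3466 — 2 statements merged into one kernel-verified Lean document; each statement's English description precedes it below -/
import Mathlib

section
/- Let F be a field and σ a ring automorphism of F with σ ∘ σ = id. The projective centralizer PK_{1,σ} = {g ∈ SL₂(F) : θ_{1,σ}(g) = g or θ_{1,σ}(g) = -g} acts transitively on the projective line ℙ¹(F) if and only if: (a) there is no x ∈ F with x·σ(x) = -1, and (b) for all x, y ∈ F there exist z ∈ F and ε ∈ {1, -1} with x·σ(x) + y·σ(y) = ε·z·σ(z). -/
/-!
Write `Q(v) = v₀ σ(v₀) + v₁ σ(v₁)` for the standard hermitian form. The flip sends `!![a, b; c, d]`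
to `!![σ d, -σ c; -σ b, σ a]`, so `θ g = ±g` forces `g = !![a, ∓σ c; c, ±σ a]`; such a matrix
multiplies `Q` by `Q (a, c) = ±det g`. Hence every element of `PK_{1,σ}` preserves `Q` up to sign,
and it can carry `v` to `c • e₁` only if `Q v = ±c σ(c)`: transitivity forces that there are no
nonzero isotropic vectors, which is (a), and that every value of `Q` is `±` a norm, which is (b).
Conversely, under (a) and (b) a nonzero `w` has `Q w = ±z σ(z)` with `z ≠ 0`, and the matrix of the
right sign with first column `w / z` lies in `PK_{1,σ}` and maps `e₁` to `w / z`; as `PK_{1,σ}` is a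
group, the orbit of the line through `e₁` is then all of `ℙ¹(F)`.
-/

open Matrix

def IsProjectivelyTransitive {n K : Type*} [Fintype n] [DecidableEq n] [Field K]
    (H : Set (SpecialLinearGroup n K)) : Prop :=
  ∀ v w : n → K, v ≠ 0 → w ≠ 0 → ∃ g ∈ H, ∃ c : K, c ≠ 0 ∧ (g : Matrix n n K) *ᵥ v = c • w

lemma IsProjectivelyTransitive.of_forall_mulVec_eq_smul {n K : Type*} [Fintype n]
    [DecidableEq n] [Field K] {H : Subgroup (SpecialLinearGroup n K)} (e : n → K)
    (h : ∀ w : n → K, w ≠ 0 → ∃ g ∈ H, ∃ c : K, c ≠ 0 ∧ (g : Matrix n n K) *ᵥ e = c • w) :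
    IsProjectivelyTransitive (H : Set (SpecialLinearGroup n K)) := by
  intro v w hv hw
  obtain ⟨gv, hgv, cv, hcv, hv⟩ := h v hv
  obtain ⟨gw, hgw, cw, hcw, hw⟩ := h w hw
  change gv • e = cv • v at hv
  change gw • e = cw • w at hw
  refine ⟨gw * gv⁻¹, H.mul_mem hgw (H.inv_mem hgv), cv⁻¹ * cw,
    mul_ne_zero (inv_ne_zero hcv) hcw, ?_⟩
  have hinv : gv⁻¹ • v = cv⁻¹ • e := by
    rw [inv_smul_eq_iff, smul_comm, hv, inv_smul_smul₀ hcv]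
  change (gw * gv⁻¹) • v = _
  rw [mul_smul, hinv, smul_comm, hw, smul_smul]

lemma Matrix.adjugate_neg_fin_two {R : Type*} [CommRing R] (X : Matrix (Fin 2) (Fin 2) R) :
    (-X).adjugate = -X.adjugate := by
  simp only [adjugate_fin_two]
  ext i j; fin_cases i <;> fin_cases j <;> simp

section CommRing

variable {R : Type*} [CommRing R] (σ : R ≃+* R)

noncomputable def standardFlip (X : Matrix (Fin 2) (Fin 2) R) : Matrix (Fin 2) (Fin 2) R :=
  !![0, 1; -1, 0] * X.map σ * (!![0, 1; -1, 0])⁻¹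

omit σ in
lemma quarterTurn_inv : (!![0, 1; -1, 0] : Matrix (Fin 2) (Fin 2) R)⁻¹ = !![0, -1; 1, 0] :=
  inv_eq_right_inv (by simp [one_fin_two])

lemma standardFlip_of (a b c d : R) :
    standardFlip σ !![a, b; c, d] = !![σ d, -σ c; -σ b, σ a] := by
  ext i j
  fin_cases i <;> fin_cases j <;>
    simp [standardFlip, quarterTurn_inv, mul_apply, vecMul, dotProduct, Fin.sum_univ_two]

lemma standardFlip_mul (X Y : Matrix (Fin 2) (Fin 2) R) :
    standardFlip σ (X * Y) = standardFlip σ X * standardFlip σ Y := by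
  have hJ : (!![0, 1; -1, 0] : Matrix (Fin 2) (Fin 2) R)⁻¹ * !![0, 1; -1, 0] = 1 := by
    simp [quarterTurn_inv, one_fin_two]
  have hmap : (X * Y).map σ = X.map σ * Y.map σ := map_mul σ.mapMatrix X Y
  simp only [standardFlip, hmap, Matrix.mul_assoc]
  rw [← Matrix.mul_assoc _ !![0, 1; -1, 0], hJ, Matrix.one_mul]

lemma standardFlip_one : standardFlip σ 1 = 1 := by
  rw [one_fin_two, standardFlip_of]
  simp

lemma standardFlip_adjugate (X : Matrix (Fin 2) (Fin 2) R) :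
    standardFlip σ X.adjugate = (standardFlip σ X).adjugate := by
  rw [eta_fin_two X, adjugate_fin_two_of, standardFlip_of, standardFlip_of, adjugate_fin_two_of]
  simp

namespace StandardFlip

def projCentralizer : Subgroup (SpecialLinearGroup (Fin 2) R) where
  carrier := {g | standardFlip σ g = g ∨ standardFlip σ g = -g}
  one_mem' := Or.inl (standardFlip_one σ)
  mul_mem' := by
    rintro g h (hg | hg) (hh | hh) <;> simp [standardFlip_mul, hg, hh]
  inv_mem' := by
    rintro g (hg | hg) <;> simp [standardFlip_adjugate, hg, adjugate_neg_fin_two]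

def hermNorm (v : Fin 2 → R) : R := v 0 * σ (v 0) + v 1 * σ (v 1)

@[simp]
lemma hermNorm_vecCons (x y : R) : hermNorm σ ![x, y] = x * σ x + y * σ y := rfl

lemma hermNorm_smul (c : R) (v : Fin 2 → R) :
    hermNorm σ (c • v) = c * σ c * hermNorm σ v := by
  simp only [hermNorm, Pi.smul_apply, smul_eq_mul, map_mul]
  ring

def plusMatrix (u : Fin 2 → R) : Matrix (Fin 2) (Fin 2) R := !![u 0, -σ (u 1); u 1, σ (u 0)]

def minusMatrix (u : Fin 2 → R) : Matrix (Fin 2) (Fin 2) R := !![u 0, σ (u 1); u 1, -σ (u 0)]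

lemma eq_plusMatrix_of_standardFlip_eq {X : Matrix (Fin 2) (Fin 2) R}
    (h : standardFlip σ X = X) :
    X = plusMatrix σ (fun i ↦ X i 0) := by
  have h01 := congr_fun₂ h 0 1
  have h11 := congr_fun₂ h 1 1
  rw [eta_fin_two X, standardFlip_of] at h01 h11
  simp only [of_apply, cons_val', cons_val_zero, cons_val_one, empty_val', cons_val_fin_one]
    at h01 h11
  ext i j; fin_cases i <;> fin_cases j <;> simp [plusMatrix, h01, h11]

lemma eq_minusMatrix_of_standardFlip_eq_neg {X : Matrix (Fin 2) (Fin 2) R}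
    (h : standardFlip σ X = -X) :
    X = minusMatrix σ (fun i ↦ X i 0) := by
  have h01 := congr_fun₂ h 0 1
  have h11 := congr_fun₂ h 1 1
  rw [eta_fin_two X, standardFlip_of] at h01 h11
  simp at h01 h11
  ext i j; fin_cases i <;> fin_cases j <;> simp [minusMatrix, h01, h11]

lemma det_plusMatrix (u : Fin 2 → R) : (plusMatrix σ u).det = hermNorm σ u := by
  simp [plusMatrix, hermNorm, det_fin_two]
  ring

lemma det_minusMatrix (u : Fin 2 → R) : (minusMatrix σ u).det = -hermNorm σ u := by
  simp [minusMatrix, hermNorm, det_fin_two]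
  ring

lemma plusMatrix_mulVec_single (u : Fin 2 → R) : plusMatrix σ u *ᵥ ![1, 0] = u := by
  ext i; fin_cases i <;> simp [plusMatrix]

lemma minusMatrix_mulVec_single (u : Fin 2 → R) : minusMatrix σ u *ᵥ ![1, 0] = u := by
  ext i; fin_cases i <;> simp [minusMatrix]

variable {σ} (hσ : ∀ x, σ (σ x) = x)
include hσ

lemma standardFlip_plusMatrix (u : Fin 2 → R) :
    standardFlip σ (plusMatrix σ u) = plusMatrix σ u := by
  simp [plusMatrix, standardFlip_of, hσ]

lemma standardFlip_minusMatrix (u : Fin 2 → R) :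
    standardFlip σ (minusMatrix σ u) = -minusMatrix σ u := by
  simp [minusMatrix, standardFlip_of, hσ]

lemma hermNorm_plusMatrix_mulVec (u v : Fin 2 → R) :
    hermNorm σ (plusMatrix σ u *ᵥ v) = hermNorm σ u * hermNorm σ v := by
  simp [plusMatrix, hermNorm, mulVec, dotProduct, hσ]
  ring

lemma hermNorm_minusMatrix_mulVec (u v : Fin 2 → R) :
    hermNorm σ (minusMatrix σ u *ᵥ v) = hermNorm σ u * hermNorm σ v := by
  simp [minusMatrix, hermNorm, mulVec, dotProduct, hσ]
  ring

lemma hermNorm_mulVec_of_mem {g : SpecialLinearGroup (Fin 2) R} (hg : g ∈ projCentralizer σ)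
    (v : Fin 2 → R) :
    hermNorm σ ((g : Matrix (Fin 2) (Fin 2) R) *ᵥ v) = hermNorm σ v ∨
      hermNorm σ ((g : Matrix (Fin 2) (Fin 2) R) *ᵥ v) = -hermNorm σ v := by
  have hdet : (g : Matrix (Fin 2) (Fin 2) R).det = 1 := g.prop
  rcases hg with hg | hg
  · rw [eq_plusMatrix_of_standardFlip_eq σ hg, det_plusMatrix] at hdet
    rw [eq_plusMatrix_of_standardFlip_eq σ hg, hermNorm_plusMatrix_mulVec hσ, hdet, one_mul]
    exact Or.inl rfl
  · rw [eq_minusMatrix_of_standardFlip_eq_neg σ hg, det_minusMatrix] at hdet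
    rw [eq_minusMatrix_of_standardFlip_eq_neg σ hg, hermNorm_minusMatrix_mulVec hσ]
    exact Or.inr (by linear_combination -hermNorm σ v * hdet)

lemma exists_mem_projCentralizer_mulVec_eq {u : Fin 2 → R}
    (hu : hermNorm σ u = 1 ∨ hermNorm σ u = -1) :
    ∃ g ∈ projCentralizer σ, (g : Matrix (Fin 2) (Fin 2) R) *ᵥ ![1, 0] = u := by
  rcases hu with hu | hu
  · exact ⟨⟨plusMatrix σ u, by rw [det_plusMatrix, hu]⟩, Or.inl (standardFlip_plusMatrix hσ u),
      plusMatrix_mulVec_single σ u⟩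
  · exact ⟨⟨minusMatrix σ u, by rw [det_minusMatrix, hu, neg_neg]⟩,
      Or.inr (standardFlip_minusMatrix hσ u), minusMatrix_mulVec_single σ u⟩

end StandardFlip

end CommRing

namespace StandardFlip

variable {F : Type*} [Field F]

lemma exists_norm_eq_neg_one_iff_isotropic (σ : F ≃+* F) :
    (∃ x, x * σ x = -1) ↔ ∃ v : Fin 2 → F, v ≠ 0 ∧ hermNorm σ v = 0 := by
  constructor
  · rintro ⟨x, hx⟩
    exact ⟨![1, x], by simp, by simp [hx]⟩
  · rintro ⟨v, hv, hQ⟩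
    rw [hermNorm] at hQ
    have h0 : v 0 ≠ 0 := by
      intro h0
      have h1 : v 1 = 0 := by simpa [h0] using hQ
      exact hv (by ext i; fin_cases i <;> simp [h0, h1])
    have hσ0 : σ (v 0) ≠ 0 := (map_ne_zero σ).mpr h0
    refine ⟨v 1 / v 0, ?_⟩
    rw [map_div₀]
    field_simp
    linear_combination hQ

variable {σ : F ≃+* F} (hσ : ∀ x, σ (σ x) = x)
include hσ

lemma exists_hermNorm_eq_of_transitive
    (H : IsProjectivelyTransitive (projCentralizer σ : Set (SpecialLinearGroup (Fin 2) F)))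
    {v : Fin 2 → F} (hv : v ≠ 0) :
    ∃ c : F, c ≠ 0 ∧ (hermNorm σ v = c * σ c ∨ hermNorm σ v = -(c * σ c)) := by
  obtain ⟨g, hg, c, hc, hgv⟩ := H v ![1, 0] hv (by simp)
  have hQ := hermNorm_mulVec_of_mem hσ hg v
  simp only [hgv, hermNorm_smul, hermNorm_vecCons, map_one, map_zero, mul_one, mul_zero,
    add_zero] at hQ
  refine ⟨c, hc, ?_⟩
  rcases hQ with h | h
  · exact Or.inl h.symm
  · exact Or.inr (by rw [h, neg_neg])

lemma not_exists_norm_eq_neg_one_of_transitive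
    (H : IsProjectivelyTransitive (projCentralizer σ : Set (SpecialLinearGroup (Fin 2) F))) :
    ¬∃ x, x * σ x = -1 := by
  rw [exists_norm_eq_neg_one_iff_isotropic]
  rintro ⟨v, hv, hQ⟩
  obtain ⟨c, hc, hcv⟩ := exists_hermNorm_eq_of_transitive hσ H hv
  rcases hcv with h | h <;> simp [hQ, hc, eq_comm (a := (0 : F))] at h

lemma exists_sum_norm_eq_of_transitive
    (H : IsProjectivelyTransitive (projCentralizer σ : Set (SpecialLinearGroup (Fin 2) F)))
    (x y : F) : ∃ z ε : F, (ε = 1 ∨ ε = -1) ∧ x * σ x + y * σ y = ε * (z * σ z) := by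
  by_cases hxy : ![x, y] = 0
  · obtain ⟨rfl, rfl⟩ : x = 0 ∧ y = 0 := ⟨congr_fun hxy 0, congr_fun hxy 1⟩
    exact ⟨0, 1, Or.inl rfl, by simp⟩
  obtain ⟨c, -, h | h⟩ := exists_hermNorm_eq_of_transitive hσ H hxy
  · exact ⟨c, 1, Or.inl rfl, by simpa using h⟩
  · exact ⟨c, -1, Or.inr rfl, by simpa using h⟩

lemma exists_mem_projCentralizer_mulVec_eq_smul (hno : ¬∃ x, x * σ x = -1)
    (hsum : ∀ x y : F, ∃ z ε : F, (ε = 1 ∨ ε = -1) ∧ x * σ x + y * σ y = ε * (z * σ z))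
    {w : Fin 2 → F} (hw : w ≠ 0) :
    ∃ g ∈ projCentralizer σ, ∃ c : F, c ≠ 0 ∧
      (g : Matrix (Fin 2) (Fin 2) F) *ᵥ ![1, 0] = c • w := by
  obtain ⟨z, ε, hε, hwz⟩ := hsum (w 0) (w 1)
  have hz : z ≠ 0 := by
    rintro rfl
    exact hno ((exists_norm_eq_neg_one_iff_isotropic σ).mpr
      ⟨w, hw, by simpa [hermNorm] using hwz⟩)
  have hu : hermNorm σ (z⁻¹ • w) = ε := by
    have hσz : σ z ≠ 0 := (map_ne_zero σ).mpr hz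
    rw [hermNorm_smul, hermNorm, hwz, map_inv₀]
    field_simp
  obtain ⟨g, hg, hgu⟩ := exists_mem_projCentralizer_mulVec_eq hσ (hu ▸ hε)
  exact ⟨g, hg, z⁻¹, inv_ne_zero hz, hgu⟩

end StandardFlip

/-- The projective centralizer `PK_{1,σ}` of the standard flip
`θ_{1,σ}` acts transitively on `ℙ¹(F)` iff `-1` is not a norm and a sum of two
norms is `±1` times a norm. -/
theorem standard_flip_projectively_transitive_iff {F : Type*} [Field F]
    (σ : F ≃+* F) (hσ : ∀ x, σ (σ x) = x) :
    (∀ v w : Fin 2 → F, v ≠ 0 → w ≠ 0 →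
      ∃ g : SpecialLinearGroup (Fin 2) F,
        (!![0, 1; -1, 0] * (g : Matrix (Fin 2) (Fin 2) F).map σ *
            (!![0, 1; -1, 0])⁻¹ = (g : Matrix (Fin 2) (Fin 2) F) ∨
         !![0, 1; -1, 0] * (g : Matrix (Fin 2) (Fin 2) F).map σ *
            (!![0, 1; -1, 0])⁻¹ = -(g : Matrix (Fin 2) (Fin 2) F)) ∧
        ∃ c : F, c ≠ 0 ∧ (g : Matrix (Fin 2) (Fin 2) F).mulVec v = c • w) ↔
    ((¬ ∃ x : F, x * σ x = -1) ∧
      ∀ x y : F, ∃ z ε : F, (ε = 1 ∨ ε = -1) ∧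
        x * σ x + y * σ y = ε * (z * σ z)) := by
  change IsProjectivelyTransitive
    (StandardFlip.projCentralizer σ : Set (SpecialLinearGroup (Fin 2) F)) ↔ _
  refine ⟨fun H ↦ ⟨StandardFlip.not_exists_norm_eq_neg_one_of_transitive hσ H,
    StandardFlip.exists_sum_norm_eq_of_transitive hσ H⟩, fun ⟨hno, hsum⟩ ↦ ?_⟩
  exact .of_forall_mulVec_eq_smul ![1, 0] fun w hw ↦
    StandardFlip.exists_mem_projCentralizer_mulVec_eq_smul hσ hno hsum hw
end

section
/- Let D be a division ring and let φ : D → D be a bijective additive map (φ(x + y) = φ(x) + φ(y)) such that φ(a⁻¹) = (φ⁻¹(a))⁻¹ for all a ∈ D with a ≠ 0. Then there exist a map σ : D → D which is either a ring automorphism or a ring anti-automorphism, and an element ε ∈ D with ε ≠ 0 and σ(ε) = ε, such that φ(x) = ε·σ(x) for all x ∈ D. Moreover, if σ is an automorphism then σ(σ(x)) = ε⁻¹·x·ε for all x ∈ D, and if σ is an anti-automorphism then σ ∘ σ = id. -/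
/-!
Hua's identity `a - (a⁻¹ + (b⁻¹ - a)⁻¹)⁻¹ = a b a` turns the flip condition into
`φ (a b a) = φ a · φ⁻¹ b · φ a`. Taking `a = 1` gives `φ⁻¹ b = ε⁻¹ · φ b · ε⁻¹` with `ε = φ 1`, so
`σ = ε⁻¹ φ` is additive, bijective, fixes `1` and preserves the triple product `a b a`.
By Hua's theorem such a Jordan map into a division ring is a homomorphism or an
antihomomorphism: linearizing the triple product gives `(σ(ab) - σa σb)(σ(ab) - σb σa) = 0`,
and a group is never the union of two proper subgroups. The formulas for `σ ε` and `σ ∘ σ` are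
read off from `φ (φ⁻¹ y) = y`.
-/

namespace AddMonoidHom

theorem eq_or_eq_of_forall_eq_or {M N : Type*} [AddZeroClass M] [AddZeroClass N]
    [IsCancelAdd N] {f g h : M →+ N} (hfgh : ∀ x, f x = g x ∨ f x = h x) : f = g ∨ f = h := by
  by_contra! hne
  obtain ⟨x, hx⟩ := DFunLike.ne_iff.mp hne.1
  obtain ⟨y, hy⟩ := DFunLike.ne_iff.mp hne.2
  have hfx : f x = h x := (hfgh x).resolve_left hx
  have hfy : f y = g y := (hfgh y).resolve_right hy
  rcases hfgh (x + y) with hxy | hxy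
  · rw [map_add, map_add, hfy] at hxy
    exact hx (add_right_cancel hxy)
  · rw [map_add, map_add, hfx] at hxy
    exact hy (add_left_cancel hxy)

section Jordan

variable {R S : Type*} [Ring R] [Ring S] {f : R →+ S}

theorem map_mul_mul_add_mul_mul_of_map_mul_mul_self
    (hf : ∀ x y, f (x * y * x) = f x * f y * f x) (x y z : R) :
    f (x * y * z + z * y * x) = f x * f y * f z + f z * f y * f x := by
  have h := hf (x + z) y
  rw [show (x + z) * y * (x + z) = x * y * x + (x * y * z + z * y * x) + z * y * z by
    noncomm_ring] at h
  simp only [map_add, hf] at h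
  rw [map_add]
  calc _ = f x * f y * f x + (f (x * y * z) + f (z * y * x)) + f z * f y * f z
        - f x * f y * f x - f z * f y * f z := by noncomm_ring
    _ = _ := by rw [h]; noncomm_ring

theorem map_mul_self_of_map_mul_mul_self (h1 : f 1 = 1)
    (hf : ∀ x y, f (x * y * x) = f x * f y * f x) (x : R) : f (x * x) = f x * f x := by
  simpa [h1] using hf x 1

theorem map_mul_sub_mul_mul_map_mul_sub_mul (h1 : f 1 = 1)
    (hf : ∀ x y, f (x * y * x) = f x * f y * f x) (x y : R) :
    (f (x * y) - f x * f y) * (f (x * y) - f y * f x) = 0 := by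
  have h := map_mul_mul_add_mul_mul_of_map_mul_mul_self hf (x * y) y x
  rw [show x * y * y * x + x * y * (x * y) = x * (y * y) * x + x * y * (x * y) by noncomm_ring,
    map_add, hf, map_mul_self_of_map_mul_mul_self h1 hf,
    map_mul_self_of_map_mul_mul_self h1 hf] at h
  calc _ = f (x * y) * f (x * y) + f x * (f y * f y) * f x
        - (f (x * y) * f y * f x + f x * f y * f (x * y)) := by noncomm_ring
    _ = 0 := by rw [← h]; noncomm_ring

theorem map_mul_eq_or_of_map_mul_mul_self [NoZeroDivisors S] (h1 : f 1 = 1)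
    (hf : ∀ x y, f (x * y * x) = f x * f y * f x) (x y : R) :
    f (x * y) = f x * f y ∨ f (x * y) = f y * f x := by
  simpa only [mul_eq_zero, sub_eq_zero] using map_mul_sub_mul_mul_map_mul_sub_mul h1 hf x y

theorem map_mul_or_map_mul_rev_of_map_mul_mul_self [NoZeroDivisors S] (h1 : f 1 = 1)
    (hf : ∀ x y, f (x * y * x) = f x * f y * f x) :
    (∀ x y, f (x * y) = f x * f y) ∨ (∀ x y, f (x * y) = f y * f x) := by
  let P : R →+ R →+ S := AddMonoidHom.mul.compr₂ f
  let M : R →+ R →+ S := (AddMonoidHom.mul.compl₂ f).comp f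
  have hPM : P = M ∨ P = M.flip :=
    eq_or_eq_of_forall_eq_or fun x ↦ eq_or_eq_of_forall_eq_or fun y ↦
      map_mul_eq_or_of_map_mul_mul_self h1 hf x y
  exact hPM.imp (fun h x y ↦ DFunLike.congr_fun (DFunLike.congr_fun h x) y)
    (fun h x y ↦ DFunLike.congr_fun (DFunLike.congr_fun h x) y)

end Jordan

end AddMonoidHom

section DivisionRing

variable {D : Type*} [DivisionRing D]

theorem hua_identity {a b : D} (ha : a ≠ 0) (hb : b ≠ 0) (hab : a * b ≠ 1) :
    a - (a⁻¹ + (b⁻¹ - a)⁻¹)⁻¹ = a * b * a := by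
  have hc : b⁻¹ - a ≠ 0 := by
    rw [sub_ne_zero]
    rintro rfl
    exact hab (inv_mul_cancel₀ hb)
  have hsum : a⁻¹ + (b⁻¹ - a)⁻¹ = a⁻¹ * b⁻¹ * (b⁻¹ - a)⁻¹ := by
    rw [show a⁻¹ * b⁻¹ = a⁻¹ * (b⁻¹ - a) + 1 by rw [mul_sub, inv_mul_cancel₀ ha, sub_add_cancel],
      add_mul, one_mul, mul_assoc, mul_inv_cancel₀ hc, mul_one]
  rw [hsum, mul_inv_rev, mul_inv_rev, inv_inv, inv_inv, inv_inv, sub_mul,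
    ← mul_assoc b⁻¹, inv_mul_cancel₀ hb, one_mul, sub_sub_cancel, mul_assoc]

namespace AddEquiv

variable {φ : D ≃+ D}

theorem map_inv_of_map_inv_ne_zero (hflip : ∀ a, a ≠ 0 → φ a⁻¹ = (φ.symm a)⁻¹) (a : D) :
    φ a⁻¹ = (φ.symm a)⁻¹ := by
  rcases eq_or_ne a 0 with rfl | ha
  · simp
  · exact hflip a ha

theorem symm_map_inv (hflip : ∀ a, φ a⁻¹ = (φ.symm a)⁻¹) (a : D) :
    φ.symm a⁻¹ = (φ a)⁻¹ := by
  apply φ.injective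
  rw [φ.apply_symm_apply, hflip, φ.symm_apply_apply]

theorem map_mul_mul_self_eq_mul_symm_mul (hflip : ∀ a, φ a⁻¹ = (φ.symm a)⁻¹) (a b : D) :
    φ (a * b * a) = φ a * φ.symm b * φ a := by
  rcases eq_or_ne a 0 with rfl | ha
  · simp
  rcases eq_or_ne b 0 with rfl | hb
  · simp
  rcases eq_or_ne (a * b) 1 with hab | hab
  · obtain rfl := eq_inv_of_mul_eq_one_right hab
    rw [symm_map_inv hflip, mul_inv_cancel₀ ha, one_mul,
      mul_inv_cancel₀ (φ.map_ne_zero_iff.mpr ha), one_mul]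
  have hab' : φ a * φ.symm b ≠ 1 := by
    intro h
    apply hab
    rw [φ.symm.injective ((eq_inv_of_mul_eq_one_right h).trans (symm_map_inv hflip a).symm),
      mul_inv_cancel₀ ha]
  rw [← hua_identity ha hb hab, ← hua_identity (φ.map_ne_zero_iff.mpr ha)
    (φ.symm.map_ne_zero_iff.mpr hb) hab']
  simp only [map_sub, map_add, hflip, symm_map_inv hflip]

/-- With `ε = φ 1` this is the `σ` of `φ = ε σ`. -/
def normalizeAtOne (φ : D ≃+ D) : D →+ D :=
  (AddMonoidHom.mulLeft (φ 1)⁻¹).comp φ.toAddMonoidHom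

@[simp]
theorem normalizeAtOne_apply (φ : D ≃+ D) (x : D) : φ.normalizeAtOne x = (φ 1)⁻¹ * φ x :=
  rfl

theorem map_one_ne_zero (φ : D ≃+ D) : φ 1 ≠ 0 :=
  φ.map_ne_zero_iff.mpr one_ne_zero

theorem normalizeAtOne_bijective (φ : D ≃+ D) : Function.Bijective φ.normalizeAtOne :=
  (Equiv.mulLeft₀ _ (inv_ne_zero φ.map_one_ne_zero)).bijective.comp φ.bijective

theorem normalizeAtOne_one (φ : D ≃+ D) : φ.normalizeAtOne 1 = 1 :=
  inv_mul_cancel₀ φ.map_one_ne_zero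

theorem map_one_mul_normalizeAtOne (φ : D ≃+ D) (x : D) : φ 1 * φ.normalizeAtOne x = φ x :=
  mul_inv_cancel_left₀ φ.map_one_ne_zero (φ x)

theorem symm_apply_eq_normalizeAtOne_mul (hflip : ∀ a, φ a⁻¹ = (φ.symm a)⁻¹) (b : D) :
    φ.symm b = φ.normalizeAtOne b * (φ 1)⁻¹ := by
  have h := map_mul_mul_self_eq_mul_symm_mul hflip 1 b
  rw [one_mul, mul_one] at h
  rw [normalizeAtOne_apply, h, mul_assoc, mul_assoc, mul_inv_cancel₀ φ.map_one_ne_zero, mul_one,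
    inv_mul_cancel_left₀ φ.map_one_ne_zero]

theorem normalizeAtOne_mul_mul_self (hflip : ∀ a, φ a⁻¹ = (φ.symm a)⁻¹) (a b : D) :
    φ.normalizeAtOne (a * b * a) =
      φ.normalizeAtOne a * φ.normalizeAtOne b * φ.normalizeAtOne a := by
  rw [normalizeAtOne_apply, map_mul_mul_self_eq_mul_symm_mul hflip,
    symm_apply_eq_normalizeAtOne_mul hflip]
  simp only [normalizeAtOne_apply, mul_assoc]

theorem normalizeAtOne_inv (hflip : ∀ a, φ a⁻¹ = (φ.symm a)⁻¹) (x : D) :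
    φ.normalizeAtOne x⁻¹ = (φ.normalizeAtOne x)⁻¹ := by
  rw [normalizeAtOne_apply, hflip, symm_apply_eq_normalizeAtOne_mul hflip, mul_inv_rev, inv_inv,
    ← mul_assoc, inv_mul_cancel₀ φ.map_one_ne_zero, one_mul]

theorem normalizeAtOne_map_one (hflip : ∀ a, φ a⁻¹ = (φ.symm a)⁻¹) :
    φ.normalizeAtOne (φ 1) = φ 1 := by
  rw [← inv_inv (φ 1), normalizeAtOne_inv hflip, normalizeAtOne_apply, hflip, symm_apply_apply,
    inv_one, mul_one]

theorem map_one_mul_normalizeAtOne_normalizeAtOne_mul (hflip : ∀ a, φ a⁻¹ = (φ.symm a)⁻¹)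
    (y : D) : φ 1 * φ.normalizeAtOne (φ.normalizeAtOne y * (φ 1)⁻¹) = y := by
  rw [map_one_mul_normalizeAtOne, ← symm_apply_eq_normalizeAtOne_mul hflip, apply_symm_apply]

end AddEquiv

end DivisionRing

/-- A bijective additive map `φ` of a division ring `D` with
`φ(a⁻¹) = (φ⁻¹(a))⁻¹` for all `a ≠ 0` is of the form `φ(x) = ε·σ(x)` where `σ`
is an automorphism or anti-automorphism of `D` and `ε ≠ 0` with `σ(ε) = ε`;
moreover `σ²(x) = ε⁻¹·x·ε` in the automorphism case and `σ² = id` in the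
anti-automorphism case. -/
theorem flip_of_division_ring {D : Type*} [DivisionRing D]
    (φ : D ≃+ D)
    (hflip : ∀ a : D, a ≠ 0 → φ a⁻¹ = (φ.symm a)⁻¹) :
    ∃ σ : D → D, Function.Bijective σ ∧
      (∀ x y : D, σ (x + y) = σ x + σ y) ∧ σ 1 = 1 ∧
      ∃ ε : D, ε ≠ 0 ∧ σ ε = ε ∧ (∀ x : D, φ x = ε * σ x) ∧
        (((∀ x y : D, σ (x * y) = σ x * σ y) ∧ ∀ x : D, σ (σ x) = ε⁻¹ * x * ε) ∨
         ((∀ x y : D, σ (x * y) = σ y * σ x) ∧ ∀ x : D, σ (σ x) = x)) := by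
  have hflip' := AddEquiv.map_inv_of_map_inv_ne_zero hflip
  have hε := φ.map_one_ne_zero
  refine ⟨φ.normalizeAtOne, φ.normalizeAtOne_bijective, map_add _, φ.normalizeAtOne_one, φ 1, hε,
    AddEquiv.normalizeAtOne_map_one hflip', fun x ↦ (φ.map_one_mul_normalizeAtOne x).symm, ?_⟩
  have hsq := AddEquiv.map_one_mul_normalizeAtOne_normalizeAtOne_mul hflip'
  have hσε := AddEquiv.normalizeAtOne_inv hflip' (φ 1)
  rw [AddEquiv.normalizeAtOne_map_one hflip'] at hσε
  rcases AddMonoidHom.map_mul_or_map_mul_rev_of_map_mul_mul_self φ.normalizeAtOne_one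
    (AddEquiv.normalizeAtOne_mul_mul_self hflip') with hmul | hmul
  · refine .inl ⟨hmul, fun x ↦ ?_⟩
    have h := hsq x
    rw [hmul, hσε] at h
    conv_rhs => rw [← h]
    rw [inv_mul_cancel_left₀ hε, inv_mul_cancel_right₀ hε]
  · refine .inr ⟨hmul, fun x ↦ ?_⟩
    have h := hsq x
    rwa [hmul, hσε, mul_inv_cancel_left₀ hε] at h
end
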